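/- arXiv:1302.1340 — 3 statements merged into one kernel-verified Lean document; each statement's English description precedes it below -/
import Mathlib

section
/- If φ is an F-filter on X, then φ̂ equals the intersection over all A ∈ φ of the closure of e(A) in δX. -/
open Set

variable {X : Type*} [Nonempty X] [TopologicalSpace X] [DiscreteTopology X]

/-- The set `X(f,r) = {x ∈ X : |f(x)| ≤ r}`. -/
def XSet (f : BoundedContinuousFunction X ℂ) (r : ℝ) : Set X := {x | ‖f x‖ ≤ r}

/-- An `F`-family on `X`: a nonempty collection of nonempty subsets of `X` such that for every
member `A ≠ X` there are `B` in the collection and `f ∈ F` with `f(B) = {0}`,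
`f(X \ A) = {1}`. -/
def FFamily (F : StarSubalgebra ℂ (BoundedContinuousFunction X ℂ)) (𝒜 : Set (Set X)) : Prop :=
  𝒜.Nonempty ∧ (∀ A ∈ 𝒜, A.Nonempty) ∧
    ∀ A ∈ 𝒜, A ≠ Set.univ →
      ∃ B ∈ 𝒜, ∃ f ∈ F, (∀ x ∈ B, f x = 0) ∧ ∀ x ∉ A, f x = 1

/-- A filter on the set `X`, viewed as a collection of subsets. -/
def IsSetFilter (φ : Set (Set X)) : Prop :=
  φ.Nonempty ∧ (∀ A ∈ φ, ∀ B ∈ φ, A ∩ B ∈ φ) ∧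
    (∀ A ∈ φ, ∀ B : Set X, A ⊆ B → B ∈ φ) ∧ ∅ ∉ φ

/-- An `F`-filter on `X` is a filter which is also an `F`-family. -/
def FFilter (F : StarSubalgebra ℂ (BoundedContinuousFunction X ℂ)) (φ : Set (Set X)) : Prop :=
  IsSetFilter φ ∧ FFamily F φ

/-- An `F`-ultrafilter on `X` is an `F`-filter maximal with respect to inclusion. -/
def FUltrafilter (F : StarSubalgebra ℂ (BoundedContinuousFunction X ℂ)) (φ : Set (Set X)) : Prop :=
  FFilter F φ ∧ ∀ ψ : Set (Set X), FFilter F ψ → φ ⊆ ψ → ψ = φ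

/-- `F₀ = {f ∈ F : X(f,r) ≠ ∅ for all r > 0}`. -/
def FZero (F : StarSubalgebra ℂ (BoundedContinuousFunction X ℂ)) :
    Set (BoundedContinuousFunction X ℂ) :=
  {f | f ∈ F ∧ ∀ r : ℝ, 0 < r → (XSet f r).Nonempty}

/-- `Z(A) = {f ∈ F : f(x) = 0 for all x ∈ A}`. -/
def ZSet (F : StarSubalgebra ℂ (BoundedContinuousFunction X ℂ)) (A : Set X) :
    Set (BoundedContinuousFunction X ℂ) :=
  {f | f ∈ F ∧ ∀ x ∈ A, f x = 0}

/-- The finite intersection property. -/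
def FIP (𝒜 : Set (Set X)) : Prop :=
  ∀ s : Finset (Set X), ↑s ⊆ 𝒜 → s.Nonempty → (⋂₀ (s : Set (Set X))).Nonempty

/-- A filter base on `X`. -/
def IsFilterBase (ℬ : Set (Set X)) : Prop :=
  ℬ.Nonempty ∧ ∅ ∉ ℬ ∧ ∀ A ∈ ℬ, ∀ B ∈ ℬ, ∃ C ∈ ℬ, C ⊆ A ∩ B

/-- The filter generated by a filter base. -/
def genFilter (ℬ : Set (Set X)) : Set (Set X) :=
  {A | ∃ B ∈ ℬ, B ⊆ A}

/-- `δX`, the space of all `F`-ultrafilters on `X`. -/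
def Delta (F : StarSubalgebra ℂ (BoundedContinuousFunction X ℂ)) : Type _ :=
  {p : Set (Set X) // FUltrafilter F p}

/-- `Â = {p ∈ δX : A ∈ p}`. -/
def hatSet (F : StarSubalgebra ℂ (BoundedContinuousFunction X ℂ)) (A : Set X) :
    Set (Delta F) :=
  {p | A ∈ p.1}

/-- The topology on `δX` having `{Â : A ⊆ X}` as a base. -/
instance (F : StarSubalgebra ℂ (BoundedContinuousFunction X ℂ)) :
    TopologicalSpace (Delta F) :=
  TopologicalSpace.generateFrom {S | ∃ A : Set X, S = hatSet F A}

/-- For an `F`-filter `φ`, `φ̂ = {p ∈ δX : φ ⊆ p}`. -/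
def hatF (F : StarSubalgebra ℂ (BoundedContinuousFunction X ℂ)) (φ : Set (Set X)) :
    Set (Delta F) :=
  {p | φ ⊆ p.1}

/-- `τ(F)`, the weakest topology on `X` making every member of `F` continuous. -/
noncomputable def tauF (F : StarSubalgebra ℂ (BoundedContinuousFunction X ℂ)) : TopologicalSpace X :=
  ⨅ f ∈ (F : Set (BoundedContinuousFunction X ℂ)),
    TopologicalSpace.induced (fun x => f x) inferInstance

/-- `B(I) = {X(f,r) : f ∈ I, r > 0}` for an ideal `I` of `F`. -/
def BIdeal (F : StarSubalgebra ℂ (BoundedContinuousFunction X ℂ)) (I : Ideal F) :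
    Set (Set X) :=
  {S | ∃ f ∈ I, ∃ r : ℝ, 0 < r ∧ S = XSet (f : BoundedContinuousFunction X ℂ) r}

/-! For an `F`-ultrafilter `p` and `A ∈ p`, each basic neighbourhood `P̂` of `p` contains a point
`e x` with `x ∈ A`: the `F`-family property of `p` gives `B ∈ p` and `f ∈ F` with `f = 0` on `B`
and `f = 1` off `A ∩ P`, so `A ∩ P` is a `τ(F)`-neighbourhood of every point of `B`, and
`B ∩ A ∩ P ≠ ∅`.

Conversely, let `p` lie in the closure of every `e(B)`, `B ∈ φ`, and let `A ∈ φ`. Choose `B ∈ φ`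
and `f ∈ F` with `f = 0` on `B` and `f = 1` off `A`. Every member of `p` meets `B`, hence every
`X(f, r)`, so adjoining the sets `X(f, r)` to `p` generates an `F`-filter; the cut-off functions
this needs are `u ∘ f` for continuous `u : ℂ → ℂ`, which lie in `F` because `F` is closed
(continuous functional calculus). By maximality `X(f, 1/2) ∈ p`, and `X(f, 1/2) ⊆ A`. -/

open Topology BoundedContinuousFunction

section Separation

variable {Y : Type*} [TopologicalSpace Y]

lemma exists_mem_apply_eq_comp_of_isClosed {F : StarSubalgebra ℂ (Y →ᵇ ℂ)}
    (hF : IsClosed (F : Set (Y →ᵇ ℂ))) {f : Y →ᵇ ℂ} (hf : f ∈ F) {u : ℂ → ℂ}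
    (hu : Continuous u) : ∃ g ∈ F, ∀ y, g y = u (f y) := by
  refine ⟨cfc u f, cfc_mem (hs := hF) u hf, fun y => ?_⟩
  let ev : (Y →ᵇ ℂ) →⋆ₐ[ℂ] ℂ :=
    (ContinuousMap.evalStarAlgHom ℂ ℂ y).comp (toContinuousMapStarₐ ℂ)
  calc cfc u f y = cfc u (f y) :=
        ev.map_cfc u f hu.continuousOn (continuous_eval_const y)
    _ = u (f y) := cfc_algebraMap (A := ℂ) (f y) u

def FSeparated (F : StarSubalgebra ℂ (Y →ᵇ ℂ)) (S T : Set Y) : Prop :=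
  ∃ f ∈ F, (∀ y ∈ S, f y = 0) ∧ ∀ y ∈ T, f y = 1

variable {F : StarSubalgebra ℂ (Y →ᵇ ℂ)}

lemma fSeparated_empty_right (S : Set Y) : FSeparated F S ∅ :=
  ⟨0, zero_mem F, fun _ _ => rfl, fun _ h => h.elim⟩

lemma FSeparated.mono {S S' T T' : Set Y} (h : FSeparated F S T) (hS : S' ⊆ S) (hT : T' ⊆ T) :
    FSeparated F S' T' :=
  let ⟨f, hf, h0, h1⟩ := h
  ⟨f, hf, fun y hy => h0 y (hS hy), fun y hy => h1 y (hT hy)⟩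

-- `1 - (1 - g₁)(1 - g₂)` vanishes where both `gᵢ` do and is `1` where either one is.
lemma FSeparated.inter_union {S₁ S₂ T₁ T₂ : Set Y} (h₁ : FSeparated F S₁ T₁)
    (h₂ : FSeparated F S₂ T₂) : FSeparated F (S₁ ∩ S₂) (T₁ ∪ T₂) := by
  obtain ⟨g₁, hg₁, h₁0, h₁1⟩ := h₁
  obtain ⟨g₂, hg₂, h₂0, h₂1⟩ := h₂
  refine ⟨g₁ + g₂ - g₁ * g₂, sub_mem (add_mem hg₁ hg₂) (mul_mem hg₁ hg₂), ?_, ?_⟩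
  · rintro y ⟨hy₁, hy₂⟩
    simp [h₁0 y hy₁, h₂0 y hy₂]
  · rintro y (hy | hy)
    · simp [h₁1 y hy]
    · simp [h₂1 y hy]

lemma fSeparated_norm_le_of_isClosed (hF : IsClosed (F : Set (Y →ᵇ ℂ))) {f : Y →ᵇ ℂ}
    (hf : f ∈ F) {s r : ℝ} (hsr : s < r) :
    FSeparated F {y | ‖f y‖ ≤ s} {y | r ≤ ‖f y‖} := by
  have hu : Continuous fun z : ℂ => ((max 0 (min 1 ((‖z‖ - s) / (r - s))) : ℝ) : ℂ) := by
    fun_prop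
  obtain ⟨g, hg, hgf⟩ := exists_mem_apply_eq_comp_of_isClosed hF hf hu
  have hrs : 0 < r - s := sub_pos.mpr hsr
  refine ⟨g, hg, fun y hy => ?_, fun y hy => ?_⟩
  · have : (‖f y‖ - s) / (r - s) ≤ 0 := div_nonpos_of_nonpos_of_nonneg (by simpa using hy) hrs.le
    simp [hgf, min_eq_right (this.trans zero_le_one), this]
  · have : 1 ≤ (‖f y‖ - s) / (r - s) := by rw [one_le_div hrs]; linarith [hy.out]
    simp [hgf, this]

end Separation

section SetFilters

variable {Y : Type*} {φ ℬ : Set (Set Y)} {A B : Set Y}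

lemma IsSetFilter.univ_mem (h : IsSetFilter φ) : univ ∈ φ :=
  let ⟨A, hA⟩ := h.1
  h.2.2.1 A hA univ (subset_univ A)

lemma IsSetFilter.nonempty_of_mem (h : IsSetFilter φ) (hA : A ∈ φ) : A.Nonempty :=
  nonempty_iff_ne_empty.mpr fun hA₀ => h.2.2.2 (hA₀ ▸ hA)

lemma IsSetFilter.inter_mem_iff (h : IsSetFilter φ) : A ∩ B ∈ φ ↔ A ∈ φ ∧ B ∈ φ :=
  ⟨fun hAB => ⟨h.2.2.1 _ hAB A inter_subset_left, h.2.2.1 _ hAB B inter_subset_right⟩,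
    fun hAB => h.2.1 A hAB.1 B hAB.2⟩

lemma subset_genFilter : ℬ ⊆ genFilter ℬ :=
  fun B hB => ⟨B, hB, subset_rfl⟩

lemma IsFilterBase.isSetFilter_genFilter (h : IsFilterBase ℬ) : IsSetFilter (genFilter ℬ) := by
  refine ⟨h.1.mono subset_genFilter, ?_, ?_, ?_⟩
  · rintro A ⟨A', hA', hA'A⟩ B ⟨B', hB', hB'B⟩
    obtain ⟨C, hC, hCAB⟩ := h.2.2 A' hA' B' hB'
    exact ⟨C, hC, hCAB.trans (inter_subset_inter hA'A hB'B)⟩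
  · rintro A ⟨A', hA', hA'A⟩ B hAB
    exact ⟨A', hA', hA'A.trans hAB⟩
  · rintro ⟨A, hA, hA₀⟩
    exact h.2.1 (subset_empty_iff.mp hA₀ ▸ hA)

end SetFilters

section FFamilies

variable {Y : Type*} [TopologicalSpace Y] {F : StarSubalgebra ℂ (Y →ᵇ ℂ)} {φ : Set (Set Y)}
  {A : Set Y}

lemma FFamily.exists_fSeparated (h : FFamily F φ) (hA : A ∈ φ) : ∃ B ∈ φ, FSeparated F B Aᶜ := by
  by_cases hA' : A = univ
  · exact ⟨A, hA, by simpa [hA'] using fSeparated_empty_right A⟩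
  · exact h.2.2 A hA hA'

lemma continuous_tauF {f : Y →ᵇ ℂ} (hf : f ∈ F) : Continuous[tauF F, _] f :=
  continuous_iInf_dom (continuous_iInf_dom (i := hf) continuous_induced_dom)

lemma FSeparated.compl_mem_nhds_tauF {S T : Set Y} (h : FSeparated F S T) {y : Y} (hy : y ∈ S) :
    Tᶜ ∈ @nhds Y (tauF F) y := by
  obtain ⟨f, hf, h₀, h₁⟩ := h
  have hU : IsOpen[tauF F] (f ⁻¹' Metric.ball 0 1) :=
    @Continuous.isOpen_preimage Y ℂ (tauF F) _ f (continuous_tauF hf) _ Metric.isOpen_ball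
  have hfy : y ∈ f ⁻¹' Metric.ball 0 1 := by simp [h₀ y hy]
  refine Filter.mem_of_superset (@IsOpen.mem_nhds Y (tauF F) _ _ hU hfy) fun z hz hzT => ?_
  simp [h₁ z hzT] at hz

lemma FFamily.exists_mem_forall_mem_nhds_tauF (h : FFamily F φ) (hA : A ∈ φ) :
    ∃ B ∈ φ, ∀ y ∈ B, A ∈ @nhds Y (tauF F) y :=
  let ⟨B, hB, hsep⟩ := h.exists_fSeparated hA
  ⟨B, hB, fun _ hy => compl_compl A ▸ hsep.compl_mem_nhds_tauF hy⟩

lemma xSet_mono (f : Y →ᵇ ℂ) {s r : ℝ} (hsr : s ≤ r) : XSet f s ⊆ XSet f r :=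
  fun _ hy => le_trans hy hsr

lemma fSeparated_xSet (hF : IsClosed (F : Set (Y →ᵇ ℂ))) {f : Y →ᵇ ℂ} (hf : f ∈ F) {s r : ℝ}
    (hsr : s < r) : FSeparated F (XSet f s) (XSet f r)ᶜ :=
  (fSeparated_norm_le_of_isClosed hF hf hsr).mono subset_rfl
    fun y (hy : ¬‖f y‖ ≤ r) => (not_le.mp hy).le

end FFamilies

section Ultrafilters

variable {Y : Type*} [TopologicalSpace Y] {F : StarSubalgebra ℂ (Y →ᵇ ℂ)} {p : Set (Set Y)}
  {f : Y →ᵇ ℂ}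

def xSetBase (p : Set (Set Y)) (f : Y →ᵇ ℂ) : Set (Set Y) :=
  {S | ∃ P ∈ p, ∃ r > 0, S = P ∩ XSet f r}

lemma isFilterBase_xSetBase (hp : IsSetFilter p)
    (hmeet : ∀ P ∈ p, ∀ r > 0, (P ∩ XSet f r).Nonempty) : IsFilterBase (xSetBase p f) := by
  refine ⟨⟨_, univ, hp.univ_mem, 1, one_pos, rfl⟩, ?_, ?_⟩
  · rintro ⟨P, hP, r, hr, h⟩
    exact (hmeet P hP r hr).ne_empty h.symm
  · rintro _ ⟨P₁, hP₁, r₁, hr₁, rfl⟩ _ ⟨P₂, hP₂, r₂, hr₂, rfl⟩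
    refine ⟨_, ⟨P₁ ∩ P₂, hp.2.1 P₁ hP₁ P₂ hP₂, min r₁ r₂, lt_min hr₁ hr₂, rfl⟩, ?_⟩
    rintro y ⟨⟨hy₁, hy₂⟩, hyr⟩
    exact ⟨⟨hy₁, xSet_mono f (min_le_left _ _) hyr⟩, hy₂, xSet_mono f (min_le_right _ _) hyr⟩

lemma fFamily_genFilter_xSetBase (hF : IsClosed (F : Set (Y →ᵇ ℂ))) (hp : FFilter F p)
    (hf : f ∈ F) (hmeet : ∀ P ∈ p, ∀ r > 0, (P ∩ XSet f r).Nonempty) :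
    FFamily F (genFilter (xSetBase p f)) := by
  have hψ := (isFilterBase_xSetBase hp.1 hmeet).isSetFilter_genFilter
  refine ⟨hψ.1, fun _ => hψ.nonempty_of_mem, ?_⟩
  rintro D ⟨_, ⟨P, hP, r, hr, rfl⟩, hPD⟩ -
  obtain ⟨B, hB, hBP⟩ := hp.2.exists_fSeparated hP
  refine ⟨B ∩ XSet f (r / 2), subset_genFilter ⟨B, hB, r / 2, half_pos hr, rfl⟩,
    (hBP.inter_union (fSeparated_xSet hF hf (half_lt_self hr))).mono subset_rfl ?_⟩
  rw [← compl_inter]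
  exact compl_subset_compl.mpr hPD

theorem FUltrafilter.xSet_mem (hF : IsClosed (F : Set (Y →ᵇ ℂ))) (hp : FUltrafilter F p)
    (hf : f ∈ F) (hmeet : ∀ P ∈ p, ∀ r > 0, (P ∩ XSet f r).Nonempty) {r : ℝ} (hr : 0 < r) :
    XSet f r ∈ p := by
  have hψ : genFilter (xSetBase p f) = p :=
    hp.2 _ ⟨(isFilterBase_xSetBase hp.1.1 hmeet).isSetFilter_genFilter,
      fFamily_genFilter_xSetBase hF hp.1 hf hmeet⟩
      fun P hP => ⟨_, ⟨P, hP, 1, one_pos, rfl⟩, inter_subset_left⟩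
  rw [← hψ]
  exact ⟨_, ⟨univ, hp.1.1.univ_mem, r, hr, rfl⟩, inter_subset_right⟩

end Ultrafilters

namespace Delta

variable {Y : Type*} [TopologicalSpace Y] {F : StarSubalgebra ℂ (Y →ᵇ ℂ)}

lemma hatSet_inter (A B : Set Y) : hatSet F (A ∩ B) = hatSet F A ∩ hatSet F B :=
  ext fun p => p.2.1.1.inter_mem_iff

lemma hatSet_univ : hatSet F (univ : Set Y) = univ :=
  eq_univ_of_forall fun p => p.2.1.1.univ_mem

lemma isTopologicalBasis_hatSet :
    TopologicalSpace.IsTopologicalBasis {S : Set (Delta F) | ∃ A, S = hatSet F A} := by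
  refine ⟨?_, sUnion_eq_univ_iff.mpr fun p =>
    ⟨_, ⟨univ, rfl⟩, hatSet_univ (F := F) ▸ mem_univ p⟩, rfl⟩
  rintro _ ⟨A, rfl⟩ _ ⟨B, rfl⟩ p hp
  exact ⟨_, ⟨A ∩ B, rfl⟩, by rwa [hatSet_inter], by rw [hatSet_inter]⟩

lemma mem_closure_iff {S : Set (Delta F)} {p : Delta F} :
    p ∈ closure S ↔ ∀ P ∈ p.1, ∃ q ∈ S, P ∈ q.1 := by
  rw [isTopologicalBasis_hatSet.mem_closure_iff]
  constructor
  · intro h P hP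
    obtain ⟨q, hq, hqS⟩ := h _ ⟨P, rfl⟩ hP
    exact ⟨q, hqS, hq⟩
  · rintro h _ ⟨P, rfl⟩ hP
    obtain ⟨q, hqS, hq⟩ := h P hP
    exact ⟨q, hq, hqS⟩

end Delta

section Evaluation

variable {Y : Type*} [TopologicalSpace Y] {F : StarSubalgebra ℂ (Y →ᵇ ℂ)} {e : Y → Delta F}
  {p : Delta F} {A : Set Y}

lemma mem_closure_image_iff (he : ∀ y, (e y).1 = {A : Set Y | A ∈ @nhds Y (tauF F) y}) :
    p ∈ closure (e '' A) ↔ ∀ P ∈ p.1, ∃ y ∈ A, P ∈ @nhds Y (tauF F) y := by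
  simp only [Delta.mem_closure_iff, exists_mem_image, he, mem_ofPred_eq]

lemma mem_closure_image_of_mem (he : ∀ y, (e y).1 = {A : Set Y | A ∈ @nhds Y (tauF F) y})
    (hA : A ∈ p.1) : p ∈ closure (e '' A) := by
  have hp := p.2.1
  refine (mem_closure_image_iff he).mpr fun P hP => ?_
  have hAP : A ∩ P ∈ p.1 := hp.1.2.1 A hA P hP
  obtain ⟨B, hB, hBAP⟩ := hp.2.exists_mem_forall_mem_nhds_tauF hAP
  obtain ⟨y, hyB, hyAP⟩ := hp.1.nonempty_of_mem (hp.1.2.1 B hB _ hAP)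
  exact ⟨y, hyAP.1, Filter.mem_of_superset (hBAP y hyB) inter_subset_right⟩

lemma mem_of_forall_mem_closure_image (he : ∀ y, (e y).1 = {A : Set Y | A ∈ @nhds Y (tauF F) y})
    (hF : IsClosed (F : Set (Y →ᵇ ℂ))) {φ : Set (Set Y)} (hφ : FFamily F φ)
    (hcl : ∀ B ∈ φ, p ∈ closure (e '' B)) (hA : A ∈ φ) : A ∈ p.1 := by
  obtain ⟨B, hB, f, hf, hf₀, hf₁⟩ := hφ.exists_fSeparated hA
  have hmeet : ∀ P ∈ p.1, ∀ r > 0, (P ∩ XSet f r).Nonempty := by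
    intro P hP r hr
    obtain ⟨y, hyB, hPy⟩ := (mem_closure_image_iff he).mp (hcl B hB) P hP
    exact ⟨y, @mem_of_mem_nhds Y (tauF F) _ _ hPy, by simp [XSet, hf₀ y hyB, hr.le]⟩
  refine p.2.1.1.2.2.1 _ (p.2.xSet_mem hF hf hmeet one_half_pos) A fun y hy => ?_
  by_contra hyA
  have : ‖f y‖ ≤ 1 / 2 := hy
  norm_num [hf₁ y hyA] at this

end Evaluation

theorem stmt11 (F : StarSubalgebra ℂ (BoundedContinuousFunction X ℂ)) (hF : IsClosed (F : Set (BoundedContinuousFunction X ℂ))) (e : X → Delta F) (he : ∀ x : X, (e x).1 = {A : Set X | A ∈ @nhds X (tauF F) x})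
    (φ : Set (Set X)) (hφ : FFilter F φ) :
    hatF F φ = ⋂ A ∈ φ, closure (e '' A) := by
  ext p
  simp only [hatF, mem_ofPred_eq, mem_iInter]
  exact ⟨fun hp A hA => mem_closure_image_of_mem he (hp hA),
    fun hcl A hA => mem_of_forall_mem_closure_image he hF hφ.2 hcl hA⟩
end

section
/- The mapping Γ : F → C(δX) which sends each f ∈ F to its unique continuous extension f̂ (the unique continuous f̂ : δX → ℂ with f = f̂ ∘ e) is an isometric *-isomorphism of F onto the C*-algebra C(δX) of all continuous complex-valued functions on the compact Hausdorff space δX. -/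
open Set

variable {X : Type*} [Nonempty X] [TopologicalSpace X] [DiscreteTopology X]

/-!
Along an `F`-ultrafilter `p` every `f ∈ F` converges. Since `f` is bounded it has a cluster value
`c` along `p`, and `p ⊓ comap f (𝓝 c)` is again an `F`-filter: the functions witnessing the
`F`-family condition are products of those for `p` with plateau functions `φ ∘ |f - c|`, which lie
in `F` by the continuous functional calculus because `F` is closed. By maximality it equals `p`, so
`f → c` along `p`. The limit `f̂ p` is continuous in `p` (the basic open set `Â` with
`A = {|f - f̂ p| ≤ ε}` controls it), multiplicative and star-preserving by the limit laws, and
`f̂ (e x) = f x` because `f` is `τ(F)`-continuous; hence `‖f̂‖ = ‖f‖`. The image of this isometry is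
closed, and it separates points of `δX` because of the `F`-family condition, so by
Stone–Weierstrass it is all of `C(δX)`.
-/

open Filter Topology BoundedContinuousFunction

section FFilter

variable {α : Type*} [TopologicalSpace α] {F : StarSubalgebra ℂ (α →ᵇ ℂ)} {p : Set (Set α)}

def FFilter.toFilter (hp : FFilter F p) : Filter α where
  sets := p
  univ_sets := let ⟨A, hA⟩ := hp.1.1; hp.1.2.2.1 A hA univ (subset_univ A)
  sets_of_superset hA hAB := hp.1.2.2.1 _ hA _ hAB
  inter_sets hA hB := hp.1.2.1 _ hA _ hB

lemma FFilter.neBot_toFilter (hp : FFilter F p) : hp.toFilter.NeBot :=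
  ⟨fun h => hp.1.2.2.2 (empty_mem_iff_bot.2 h)⟩

lemma FFilter.exists_separating (hp : FFilter F p) {A : Set α} (hA : A ∈ p) :
    ∃ B ∈ p, ∃ f ∈ F, (∀ x ∈ B, f x = 0) ∧ ∀ x ∉ A, f x = 1 := by
  by_cases hAu : A = univ
  · exact ⟨A, hA, 0, zero_mem F, fun _ _ => rfl, by simp [hAu]⟩
  · exact hp.2.2.2 A hA hAu

lemma FFilter.of_filter (l : Filter α) [l.NeBot]
    (hl : ∀ A ∈ l, ∃ B ∈ l, ∃ f ∈ F, (∀ x ∈ B, f x = 0) ∧ ∀ x ∉ A, f x = 1) :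
    FFilter F l.sets :=
  ⟨⟨⟨univ, univ_mem⟩, fun _ hA _ hB => inter_mem hA hB, fun _ hA _ hAB => mem_of_superset hA hAB,
    empty_mem_iff_bot.not.2 (NeBot.ne ‹_›)⟩,
    ⟨univ, univ_mem⟩, fun _ hA => nonempty_of_mem hA, fun A hA _ => hl A hA⟩

end FFilter

section FunctionalCalculus

variable {α : Type*} [TopologicalSpace α]

lemma BoundedContinuousFunction.cfc_apply_of_continuous {g : ℂ → ℂ} (hg : Continuous g)
    (u : α →ᵇ ℂ) (x : α) : cfc g u x = g (u x) := by
  let evalx : (α →ᵇ ℂ) →⋆ₐ[ℂ] ℂ :=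
    { toFun := fun f => f x, map_one' := rfl, map_mul' := fun _ _ => rfl, map_zero' := rfl,
      map_add' := fun _ _ => rfl, commutes' := fun _ => rfl, map_star' := fun _ => rfl }
  have hevalx : Continuous evalx := (BoundedContinuousFunction.evalCLM ℂ x).continuous
  change evalx (cfc g u) = _
  rw [StarAlgHomClass.map_cfc evalx g u]
  exact cfc_algebraMap (A := ℂ) (u x) g

lemma StarSubalgebra.exists_plateau {F : StarSubalgebra ℂ (α →ᵇ ℂ)}
    (hF : IsClosed (F : Set (α →ᵇ ℂ))) {u : α →ᵇ ℂ} (hu : u ∈ F) {r s : ℝ} (hrs : r < s) :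
    ∃ h ∈ F, (∀ x, ‖u x‖ ≤ r → h x = 0) ∧ ∀ x, s ≤ ‖u x‖ → h x = 1 := by
  obtain ⟨φ, hφ0, hφ1, -⟩ := exists_continuous_zero_one_of_isClosed
    (Metric.isClosed_closedBall (x := (0 : ℂ)) (ε := r)) Metric.isOpen_ball.isClosed_compl
    (disjoint_compl_right_iff_subset.2 (Metric.closedBall_subset_ball hrs))
  have hg : Continuous fun z => (φ z : ℂ) := Complex.continuous_ofReal.comp φ.continuous
  have : IsClosed (F : Set (α →ᵇ ℂ)) := hF
  refine ⟨cfc (fun z => (φ z : ℂ)) u, cfc_mem _ hu, fun x hx => ?_, fun x hx => ?_⟩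
  · rw [BoundedContinuousFunction.cfc_apply_of_continuous hg,
      hφ0 (mem_closedBall_zero_iff.2 hx), Pi.zero_apply, Complex.ofReal_zero]
  · rw [BoundedContinuousFunction.cfc_apply_of_continuous hg,
      hφ1 (by simpa using hx), Pi.one_apply, Complex.ofReal_one]

end FunctionalCalculus

section Limit

variable {α : Type*} [TopologicalSpace α] {F : StarSubalgebra ℂ (α →ᵇ ℂ)} {p : Set (Set α)}

lemma BoundedContinuousFunction.exists_mapClusterPt {E : Type*} [NormedAddCommGroup E]
    [ProperSpace E] (f : α →ᵇ E) (l : Filter α) [l.NeBot] : ∃ c, MapClusterPt c l f :=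
  let ⟨c, _, hc⟩ := isCompact_closedBall (0 : E) ‖f‖ (f := map f l)
    (tendsto_principal.2 (univ_mem' fun x => mem_closedBall_zero_iff.2 (f.norm_coe_le_norm x)))
  ⟨c, hc⟩

lemma FUltrafilter.tendsto_of_mapClusterPt (hF : IsClosed (F : Set (α →ᵇ ℂ)))
    (hp : FUltrafilter F p) {f : α →ᵇ ℂ} (hf : f ∈ F) {c : ℂ}
    (hc : MapClusterPt c hp.1.toFilter f) : Tendsto f hp.1.toFilter (𝓝 c) := by
  set ψ := comap f (𝓝 c) ⊓ hp.1.toFilter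
  have : ψ.NeBot := neBot_inf_comap_iff_map'.2 hc.neBot
  have hsep : ∀ A ∈ ψ, ∃ B ∈ ψ, ∃ k ∈ F, (∀ x ∈ B, k x = 0) ∧ ∀ x ∉ A, k x = 1 := by
    intro A hA
    obtain ⟨t, ht, A₀, hA₀, hsub⟩ := mem_inf_iff_superset.1 hA
    obtain ⟨r, hr, hrt⟩ := (Metric.nhds_basis_ball.comap f).mem_iff.1 ht
    obtain ⟨B₀, hB₀, g, hg, hg0, hg1⟩ := hp.1.exists_separating hA₀
    obtain ⟨h, hh, hh0, hh1⟩ := StarSubalgebra.exists_plateau hF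
      (sub_mem hf (F.algebraMap_mem c)) (half_lt_self hr)
    -- `1 - (1 - g) * (1 - h)` vanishes where `g` and `h` both do, and is `1` where either is.
    refine ⟨f ⁻¹' Metric.ball c (r / 2) ∩ B₀,
      inter_mem_inf (preimage_mem_comap (Metric.ball_mem_nhds c (half_pos hr))) hB₀,
      1 - (1 - g) * (1 - h), sub_mem (one_mem F) (mul_mem (sub_mem (one_mem F) hg)
        (sub_mem (one_mem F) hh)), ?_, ?_⟩
    · rintro x ⟨hxc, hxB₀⟩
      have : h x = 0 := hh0 x (by simpa [← dist_eq_norm] using le_of_lt hxc)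
      simp [hg0 x hxB₀, this]
    · intro x hxA
      by_cases hxA₀ : x ∈ A₀
      · have : h x = 1 := hh1 x <| by
          simpa [← dist_eq_norm] using
            fun hlt => hxA (hsub ⟨hrt (Metric.mem_ball.2 hlt), hxA₀⟩)
        simp [this]
      · simp [hg1 x hxA₀]
  have hψp : ψ.sets = p := hp.2 _ (FFilter.of_filter ψ hsep) fun A hA => mem_inf_of_right hA
  exact tendsto_iff_comap.2 fun s hs => (hψp ▸ mem_inf_of_left hs : s ∈ p)

lemma FUltrafilter.exists_tendsto (hF : IsClosed (F : Set (α →ᵇ ℂ))) (hp : FUltrafilter F p)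
    {f : α →ᵇ ℂ} (hf : f ∈ F) : ∃ c, Tendsto f hp.1.toFilter (𝓝 c) :=
  have := hp.1.neBot_toFilter
  let ⟨c, hc⟩ := f.exists_mapClusterPt hp.1.toFilter
  ⟨c, hp.tendsto_of_mapClusterPt hF hf hc⟩

end Limit

namespace Delta

variable {α : Type*} [TopologicalSpace α] {F : StarSubalgebra ℂ (α →ᵇ ℂ)}

def filter (p : Delta F) : Filter α := p.2.1.toFilter

instance (p : Delta F) : p.filter.NeBot := p.2.1.neBot_toFilter

lemma isOpen_hatSet (A : Set α) : IsOpen (hatSet F A) :=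
  TopologicalSpace.isOpen_generateFrom_of_mem ⟨A, rfl⟩

noncomputable def extend (f : F) (p : Delta F) : ℂ := limUnder p.filter (f : α →ᵇ ℂ)

variable (hF : IsClosed (F : Set (α →ᵇ ℂ)))
include hF

lemma tendsto_extend (f : F) (p : Delta F) :
    Tendsto (f : α →ᵇ ℂ) p.filter (𝓝 (extend f p)) :=
  tendsto_nhds_limUnder (p.2.exists_tendsto hF f.2)

lemma extend_eq_of_tendsto {f : F} {p : Delta F} {c : ℂ}
    (h : Tendsto (f : α →ᵇ ℂ) p.filter (𝓝 c)) : extend f p = c :=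
  tendsto_nhds_unique (tendsto_extend hF f p) h

lemma extend_mem_of_eventually {f : F} {p : Delta F} {K : Set ℂ} (hK : IsClosed K)
    (h : ∀ᶠ x in p.filter, (f : α →ᵇ ℂ) x ∈ K) : extend f p ∈ K :=
  hK.mem_of_tendsto (tendsto_extend hF f p) h

lemma extend_add (f g : F) (p : Delta F) : extend (f + g) p = extend f p + extend g p :=
  extend_eq_of_tendsto hF ((tendsto_extend hF f p).add (tendsto_extend hF g p))

lemma extend_mul (f g : F) (p : Delta F) : extend (f * g) p = extend f p * extend g p :=
  extend_eq_of_tendsto hF ((tendsto_extend hF f p).mul (tendsto_extend hF g p))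

lemma extend_star (f : F) (p : Delta F) : extend (star f) p = star (extend f p) :=
  extend_eq_of_tendsto hF (tendsto_extend hF f p).star

lemma extend_algebraMap (c : ℂ) (p : Delta F) : extend (algebraMap ℂ F c) p = c :=
  extend_eq_of_tendsto hF tendsto_const_nhds

lemma continuous_extend (f : F) : Continuous (extend f) := by
  refine continuous_iff_continuousAt.2 fun p => Metric.tendsto_nhds.2 fun ε hε => ?_
  have hA : {x | (f : α →ᵇ ℂ) x ∈ Metric.closedBall (extend f p) (ε / 2)} ∈ p.filter :=
    tendsto_extend hF f p (Metric.closedBall_mem_nhds _ (half_pos hε))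
  refine mem_of_superset ((isOpen_hatSet _).mem_nhds hA) fun q hq => ?_
  have := extend_mem_of_eventually hF Metric.isClosed_closedBall (hq : _ ∈ q.filter)
  exact lt_of_le_of_lt this (half_lt_self hε)

lemma extend_of_nhds {p : Delta F} {x : α} (hp : p.1 = {A | A ∈ @nhds α (tauF F) x}) (f : F) :
    extend f p = (f : α →ᵇ ℂ) x := by
  have hfilter : p.filter = @nhds α (tauF F) x := Filter.ext fun A => Set.ext_iff.1 hp A
  have hf : Continuous[tauF F, _] (f : α →ᵇ ℂ) :=
    continuous_iInf_dom (continuous_iInf_dom (i := f.2) continuous_induced_dom)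
  exact extend_eq_of_tendsto hF (hfilter ▸ @Continuous.tendsto α ℂ (tauF F) _ _ hf x)

lemma exists_extend_ne {p q : Delta F} (hpq : p ≠ q) : ∃ f : F, extend f p ≠ extend f q := by
  obtain ⟨A, hAp, hAq⟩ : ∃ A ∈ p.1, A ∉ q.1 := by
    by_contra! h
    exact hpq (Subtype.ext (p.2.2 q.1 q.2.1 h).symm)
  obtain ⟨B, hB, g, hg, hg0, hg1⟩ := p.2.1.exists_separating hAp
  refine ⟨⟨g, hg⟩, fun h => hAq ?_⟩
  have hp0 : extend ⟨g, hg⟩ p = 0 :=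
    extend_mem_of_eventually hF isClosed_singleton (mem_of_superset hB hg0)
  have hq := tendsto_extend hF ⟨g, hg⟩ q
  rw [← h, hp0] at hq
  show A ∈ q.filter
  refine mem_of_superset (hq (Metric.ball_mem_nhds 0 one_pos)) fun x hx => ?_
  by_contra hxA
  simp [hg1 x hxA] at hx

noncomputable def extendStarAlgHom : F →⋆ₐ[ℂ] C(Delta F, ℂ) where
  toFun f := ⟨extend f, continuous_extend hF f⟩
  map_one' := ContinuousMap.ext fun p => by simpa using extend_algebraMap hF 1 p
  map_mul' f g := ContinuousMap.ext (extend_mul hF f g)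
  map_zero' := ContinuousMap.ext fun p => by simpa using extend_algebraMap hF 0 p
  map_add' f g := ContinuousMap.ext (extend_add hF f g)
  commutes' c := ContinuousMap.ext (extend_algebraMap hF c)
  map_star' f := ContinuousMap.ext (extend_star hF f)

lemma norm_extendStarAlgHom [CompactSpace (Delta F)] {e : α → Delta F}
    (he : ∀ x, (e x).1 = {A | A ∈ @nhds α (tauF F) x}) (f : F) :
    ‖extendStarAlgHom hF f‖ = ‖(f : α →ᵇ ℂ)‖ := by
  refine le_antisymm ((ContinuousMap.norm_le _ (norm_nonneg _)).2 fun p => ?_)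
    ((BoundedContinuousFunction.norm_le (norm_nonneg _)).2 fun x => ?_)
  · exact mem_closedBall_zero_iff.1 (extend_mem_of_eventually hF Metric.isClosed_closedBall
      (univ_mem' fun x => mem_closedBall_zero_iff.2 (norm_coe_le_norm _ x)))
  · rw [← extend_of_nhds hF (he x) f]
    exact (extendStarAlgHom hF f).norm_coe_le_norm (e x)

end Delta

theorem StarAlgHom.surjective_of_isometry {K A : Type*} [TopologicalSpace K] [CompactSpace K]
    [Semiring A] [StarRing A] [Algebra ℂ A] [MetricSpace A] [CompleteSpace A]
    {φ : A →⋆ₐ[ℂ] C(K, ℂ)} (hφ : Isometry φ) (hsep : ∀ p q, p ≠ q → ∃ a, φ a p ≠ φ a q) :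
    Function.Surjective φ := by
  have hdense := ContinuousMap.starSubalgebra_topologicalClosure_eq_top_of_separatesPoints
    φ.range fun p q hpq => let ⟨a, ha⟩ := hsep p q hpq; ⟨_, ⟨φ a, φ.mem_range_self a, rfl⟩, ha⟩
  intro g
  have hg : g ∈ φ.range.topologicalClosure := hdense ▸ StarSubalgebra.mem_top
  rw [← SetLike.mem_coe, StarSubalgebra.topologicalClosure_coe] at hg
  change g ∈ closure (Set.range φ) at hg
  rwa [hφ.isClosedEmbedding.isClosed_range.closure_eq] at hg

theorem stmt14 (F : StarSubalgebra ℂ (BoundedContinuousFunction X ℂ)) (hF : IsClosed (F : Set (BoundedContinuousFunction X ℂ))) [CompactSpace (Delta F)] (e : X → Delta F) (he : ∀ x : X, (e x).1 = {A : Set X | A ∈ @nhds X (tauF F) x}) :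
    ∃ Γ : F ≃⋆ₐ[ℂ] C(Delta F, ℂ),
      (∀ f : F, ‖Γ f‖ = ‖(f : BoundedContinuousFunction X ℂ)‖) ∧
      ∀ (f : F) (x : X), Γ f (e x) = (f : BoundedContinuousFunction X ℂ) x := by
  have : CompleteSpace F := hF.completeSpace_coe
  have hiso : Isometry (Delta.extendStarAlgHom hF) :=
    AddMonoidHomClass.isometry_of_norm _ (Delta.norm_extendStarAlgHom hF he)
  have hbij : Function.Bijective (Delta.extendStarAlgHom hF) :=
    ⟨hiso.injective, StarAlgHom.surjective_of_isometry hiso fun _ _ => Delta.exists_extend_ne hF⟩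
  exact ⟨StarAlgEquiv.ofBijective _ hbij, Delta.norm_extendStarAlgHom hF he,
    fun f x => Delta.extend_of_nhds hF (he x) f⟩
end

section
/- Suppose Y is a compact Hausdorff space and ε : X → Y is a function such that ε(X) is dense in Y. Then: (i) the set F = {h ∘ ε : h ∈ C(Y)} is a C*-subalgebra of ℓ∞(X) containing the constant functions; (ii) F is isometrically isomorphic to C(Y); (iii) there exists a homeomorphism G : δX → Y (where δX is the space of F-ultrafilters for this F) such that G ∘ e = ε. -/
open Set

variable {X : Type*} [Nonempty X] [TopologicalSpace X] [DiscreteTopology X]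

/-!
Composition with `ε` is an isometric `⋆`-homomorphism `C(Y) → ℓ∞(X)` because `ε(X)` is dense, so
its range `F` is closed and isomorphic to `C(Y)`. Urysohn functions on `Y` pulled back along `ε`
lie in `F`, so `τ(F)` is the topology induced by `ε`, and the `F`-ultrafilters are exactly the
traces `comap ε (𝓝 y)`: such a trace is maximal because every larger `F`-filter clusters at `y`,
and every `F`-ultrafilter is one of them because, `Y` being compact, the closures of the
`ε`-images of its members have a common point. The resulting bijection `Y → δX` is continuous
from a compact space to a Hausdorff one, hence a homeomorphism.
-/

open Filter Topology BoundedContinuousFunction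

lemma exists_continuousMap_eqOn_zero_nhds_one_compl {Y : Type*} [TopologicalSpace Y] [T4Space Y]
    {y : Y} {U : Set Y} (hU : U ∈ 𝓝 y) :
    ∃ V ∈ 𝓝 y, ∃ h : C(Y, ℂ), EqOn h 0 V ∧ EqOn h 1 Uᶜ := by
  obtain ⟨V, hV, hVc, hVU⟩ := exists_mem_nhds_isClosed_subset (interior_mem_nhds.2 hU)
  obtain ⟨f, hf0, hf1, -⟩ := exists_continuous_zero_one_of_isClosed hVc
    isOpen_interior.isClosed_compl (disjoint_compl_right_iff_subset.2 hVU)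
  refine ⟨V, hV, (⟨Complex.ofReal, Complex.continuous_ofReal⟩ : C(ℝ, ℂ)).comp f,
    fun z hz => by simp [hf0 hz], fun z hz => ?_⟩
  simp [hf1 (compl_subset_compl.2 interior_subset hz)]

lemma isSetFilter_sets {α : Type*} (l : Filter α) [l.NeBot] : IsSetFilter l.sets :=
  ⟨⟨univ, univ_mem⟩, fun _ hA _ hB => inter_mem hA hB, fun _ hA _ hAB => mem_of_superset hA hAB,
    empty_mem_iff_bot.not.2 (NeBot.ne ‹_›)⟩

lemma DenseRange.comap_nhds_neBot {α β : Type*} [TopologicalSpace β] {f : α → β}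
    (hf : DenseRange f) (b : β) : (comap f (𝓝 b)).NeBot :=
  comap_neBot fun _ hs => hf.mem_nhds hs

lemma DenseRange.comap_nhds_injective {α β : Type*} [TopologicalSpace β] [T2Space β] {f : α → β}
    (hf : DenseRange f) : Function.Injective fun b => comap f (𝓝 b) := by
  intro b b' (hbb : comap f (𝓝 b) = comap f (𝓝 b'))
  have := hf.comap_nhds_neBot b
  exact eq_of_nhds_neBot (neBot_of_le (f := map f (comap f (𝓝 b)))
    (le_inf map_comap_le (hbb ▸ map_comap_le)))

section

variable {X Y : Type*} [TopologicalSpace X] [TopologicalSpace Y]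

lemma disjoint_hatSet {F : StarSubalgebra ℂ (X →ᵇ ℂ)} {A B : Set X} (h : Disjoint A B) :
    Disjoint (hatSet F A) (hatSet F B) := by
  refine disjoint_left.2 fun p hA hB => ?_
  have hp := p.2.1.1
  exact hp.2.2.2 (h.inter_eq ▸ hp.2.1 A hA B hB)

lemma isOpen_hatSet (F : StarSubalgebra ℂ (X →ᵇ ℂ)) (A : Set X) : IsOpen (hatSet F A) :=
  TopologicalSpace.isOpen_generateFrom_of_mem ⟨A, rfl⟩

variable [DiscreteTopology X] [CompactSpace Y]

noncomputable def compBounded (ε : X → Y) : C(Y, ℂ) →⋆ₐ[ℂ] X →ᵇ ℂ where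
  toFun h := (mkOfCompact h).compContinuous ⟨ε, continuous_of_discreteTopology⟩
  map_one' := rfl
  map_mul' _ _ := rfl
  map_zero' := rfl
  map_add' _ _ := rfl
  commutes' _ := rfl
  map_star' _ := rfl

@[simp] lemma compBounded_apply (ε : X → Y) (h : C(Y, ℂ)) (x : X) :
    compBounded ε h x = h (ε x) := rfl

lemma coe_range_compBounded (ε : X → Y) :
    ((compBounded ε).range : Set (X →ᵇ ℂ)) = {f | ∃ h : C(Y, ℂ), ∀ x, f x = h (ε x)} := by
  ext f
  refine ⟨?_, fun ⟨h, hf⟩ => ⟨h, ext fun x => (hf x).symm⟩⟩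
  rintro ⟨h, rfl⟩
  exact ⟨h, fun _ => rfl⟩

lemma norm_compBounded {ε : X → Y} (hε : DenseRange ε) (h : C(Y, ℂ)) :
    ‖compBounded ε h‖ = ‖h‖ := by
  refine le_antisymm ((norm_le (norm_nonneg h)).2 fun x => h.norm_coe_le_norm (ε x)) ?_
  refine (ContinuousMap.norm_le h (norm_nonneg _)).2 fun y => ?_
  exact hε.induction_on (p := fun z => ‖h z‖ ≤ ‖compBounded ε h‖) y
    (isClosed_le (by fun_prop) continuous_const) fun x => (compBounded ε h).norm_coe_le_norm x

lemma isometry_compBounded {ε : X → Y} (hε : DenseRange ε) : Isometry (compBounded ε) :=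
  AddMonoidHomClass.isometry_of_norm _ (norm_compBounded hε)

end

section

variable {X Y : Type*} [TopologicalSpace X] [DiscreteTopology X] [TopologicalSpace Y]
  [CompactSpace Y] {ε : X → Y}

lemma subset_comap_nhds_of_fFamily {ψ : Set (Set X)} (hψ : FFamily (compBounded ε).range ψ)
    {y : Y} (hy : ∀ B ∈ ψ, y ∈ closure (ε '' B)) : ψ ⊆ (comap ε (𝓝 y)).sets := by
  intro A hA
  by_cases hAu : A = univ
  · exact hAu ▸ univ_mem
  obtain ⟨B, hB, _, ⟨h, rfl⟩, h0, h1⟩ := hψ.2.2 A hA hAu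
  have hy0 : h y = 0 := by
    refine closure_minimal ?_ (isClosed_eq h.continuous continuous_const) (hy B hB)
    rintro _ ⟨x, hx, rfl⟩
    exact h0 x hx
  refine ⟨{z | h z ≠ 1}, (isOpen_ne_fun h.continuous continuous_const).mem_nhds (by simp [hy0]),
    fun x hx => ?_⟩
  by_contra hxA
  exact hx (h1 x hxA)

variable [T2Space Y]

lemma fFilter_comap_nhds (hε : DenseRange ε) (y : Y) :
    FFilter (compBounded ε).range (comap ε (𝓝 y)).sets := by
  have := hε.comap_nhds_neBot y
  refine ⟨isSetFilter_sets _, ⟨univ, univ_mem⟩, fun A hA => nonempty_of_mem hA, ?_⟩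
  rintro A ⟨U, hU, hUA⟩ -
  obtain ⟨V, hV, h, h0, h1⟩ := exists_continuousMap_eqOn_zero_nhds_one_compl hU
  exact ⟨ε ⁻¹' V, preimage_mem_comap hV, compBounded ε h, ⟨h, rfl⟩, fun x hx => h0 hx,
    fun x hx => h1 fun hxU => hx (hUA hxU)⟩

lemma fUltrafilter_comap_nhds (hε : DenseRange ε) (y : Y) :
    FUltrafilter (compBounded ε).range (comap ε (𝓝 y)).sets := by
  refine ⟨fFilter_comap_nhds hε y, fun ψ hψ hsub =>
    (subset_comap_nhds_of_fFamily hψ.2 ?_).antisymm hsub⟩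
  refine fun B hB => mem_closure_iff_nhds.2 fun U hU => ?_
  obtain ⟨x, hxB, hxU⟩ := hψ.2.2.1 _ (hψ.1.2.1 B hB _ (hsub (preimage_mem_comap hU)))
  exact ⟨ε x, hxU, x, hxB, rfl⟩

lemma exists_eq_comap_nhds_of_fUltrafilter (hε : DenseRange ε) {p : Set (Set X)}
    (hp : FUltrafilter (compBounded ε).range p) : ∃ y, (comap ε (𝓝 y)).sets = p := by
  have : Nonempty p := hp.1.2.1.to_subtype
  obtain ⟨y, hy⟩ : (⋂ A : p, closure (ε '' A)).Nonempty := by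
    refine IsCompact.nonempty_iInter_of_directed_nonempty_isCompact_isClosed _ ?_
      (fun A => ((hp.1.2.2.1 A A.2).image ε).closure) (fun _ => isClosed_closure.isCompact)
      (fun _ => isClosed_closure)
    rintro ⟨A, hA⟩ ⟨B, hB⟩
    exact ⟨⟨A ∩ B, hp.1.1.2.1 A hA B hB⟩, closure_mono (image_mono inter_subset_left),
      closure_mono (image_mono inter_subset_right)⟩
  exact ⟨y, hp.2 _ (fFilter_comap_nhds hε y)
    (subset_comap_nhds_of_fFamily hp.1.2 fun B hB => mem_iInter.1 hy ⟨B, hB⟩)⟩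

lemma tauF_range_compBounded :
    tauF (compBounded ε).range = TopologicalSpace.induced ε ‹_› := by
  refine le_antisymm ?_ (le_iInf₂ fun f hf => ?_)
  · rw [← continuous_iff_le_induced, continuous_def]
    intro U hU
    refine (@isOpen_iff_mem_nhds X (tauF _) _).2 fun x hx => ?_
    obtain ⟨V, hV, h, h0, h1⟩ := exists_continuousMap_eqOn_zero_nhds_one_compl (hU.mem_nhds hx)
    have hcont : Continuous[tauF (compBounded ε).range, _] (compBounded ε h) :=
      continuous_iff_le_induced.2 (iInf₂_le _ ⟨h, rfl⟩)
    have hopen : IsOpen[tauF (compBounded ε).range] (compBounded ε h ⁻¹' {1}ᶜ) :=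
      @IsOpen.preimage X ℂ (tauF _) _ _ hcont _ isOpen_compl_singleton
    refine (@mem_nhds_iff X (tauF _) _ _).2
      ⟨_, fun x' hx' => ?_, hopen, by simp [h0 (mem_of_mem_nhds hV)]⟩
    by_contra hx'U
    exact hx' (h1 hx'U)
  · obtain ⟨h, rfl⟩ := hf
    exact (induced_mono (continuous_iff_le_induced.1 h.continuous)).trans_eq induced_compose

noncomputable def toDelta (hε : DenseRange ε) (y : Y) : Delta (compBounded ε).range :=
  ⟨(comap ε (𝓝 y)).sets, fUltrafilter_comap_nhds hε y⟩

lemma toDelta_bijective (hε : DenseRange ε) : Function.Bijective (toDelta hε) :=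
  ⟨fun _ _ h => hε.comap_nhds_injective (filter_eq (congrArg Subtype.val h)),
    fun p => (exists_eq_comap_nhds_of_fUltrafilter hε p.2).imp fun _ => Subtype.ext⟩

lemma continuous_toDelta (hε : DenseRange ε) : Continuous (toDelta hε) := by
  refine continuous_generateFrom_iff.2 ?_
  rintro _ ⟨A, rfl⟩
  simp only [hatSet, toDelta, preimage_ofPred_eq, Filter.mem_sets, mem_comap']
  exact isOpen_setOfPred_eventually_nhds

lemma t2Space_delta (hε : DenseRange ε) : T2Space (Delta (compBounded ε).range) := by
  refine ⟨(toDelta_bijective hε).2.forall₂.2 fun y y' hne => ?_⟩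
  obtain ⟨U, V, hU, hV, hyU, hyV, hUV⟩ := t2_separation (ne_of_apply_ne _ hne)
  exact ⟨_, _, isOpen_hatSet _ (ε ⁻¹' U), isOpen_hatSet _ (ε ⁻¹' V),
    preimage_mem_comap (hU.mem_nhds hyU), preimage_mem_comap (hV.mem_nhds hyV),
    disjoint_hatSet (hUV.preimage ε)⟩

end

theorem stmt15 {Y : Type*} [TopologicalSpace Y] [CompactSpace Y] [T2Space Y]
    (ε : X → Y) (hε : Dense (Set.range ε)) :
    ∃ F : StarSubalgebra ℂ (BoundedContinuousFunction X ℂ),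
      (F : Set (BoundedContinuousFunction X ℂ)) = {f : BoundedContinuousFunction X ℂ | ∃ h : C(Y, ℂ), ∀ x : X, f x = h (ε x)} ∧
      IsClosed (F : Set (BoundedContinuousFunction X ℂ)) ∧
      (∃ Φ : F ≃⋆ₐ[ℂ] C(Y, ℂ), ∀ f : F, ‖Φ f‖ = ‖(f : BoundedContinuousFunction X ℂ)‖) ∧
      ∀ e : X → Delta F, (∀ x : X, (e x).1 = {A : Set X | A ∈ @nhds X (tauF F) x}) →
        ∃ G : Delta F ≃ₜ Y, ∀ x : X, G (e x) = ε x := by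
  have hinj := (isometry_compBounded hε).injective
  refine ⟨(compBounded ε).range, coe_range_compBounded ε,
    (isometry_compBounded hε).isClosedEmbedding.isClosed_range, ?_, fun e he => ?_⟩
  · refine ⟨(StarAlgEquiv.ofInjective _ hinj).symm, fun f => ?_⟩
    conv_rhs => rw [← (StarAlgEquiv.ofInjective _ hinj).apply_symm_apply f]
    exact (norm_compBounded hε _).symm
  · have := t2Space_delta hε
    let G := (continuous_toDelta hε).homeoOfEquivCompactToT2
      (f := Equiv.ofBijective _ (toDelta_bijective hε))
    refine ⟨G.symm, fun x => G.symm_apply_eq.2 (Subtype.ext ?_)⟩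
    rw [he x, tauF_range_compBounded, nhds_induced]
    rfl
end
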